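/- Under the hypotheses of the local convergence theorem (H Hilbert, Ω ⊆ H open, F : Ω → H continuously Fréchet differentiable, T maximal monotone, x* ∈ Ω with 0 ∈ F(x*) + T(x*), F'(x*) positive-semidefinite, F̂'(x*) := (F'(x*)+F'(x*)*)/2 boundedly invertible, and f : [0, R) → ℝ a majorant function for F at x* on B(x*, κ) — f twice continuously differentiable, f(0) = 0, f'(0) = −1, f' convex and strictly increasing, ‖F̂'(x*)⁻¹‖·‖F'(x) − F'(x* + τ(x − x*))‖ ≤ f'(‖x − x*‖) − f'(τ‖x − x*‖) for all τ ∈ [0,1], x ∈ B(x*, κ), κ := sup{t ∈ [0,R): B(x*,t) ⊂ Ω}, ν := sup{t : f'(t) < 0}, ρ := sup{t ∈ (0,ν) : f(t)/(t f'(t)) − 1 < 1}, r := min{κ, ρ}): for x₀ ∈ B(x*, r) \ {x*} and {x_k} a Newton sequence (0 ∈ F(x_k) + F'(x_k)(x_{k+1}−x_k) + T(x_{k+1}) for all k), with t₀ := ‖x*−x₀‖ and t_{k+1} := |t_k − f(t_k)/f'(t_k)|, one has ‖x* − x_k‖ ≤ t₀ · (t₁/t₀)^{2^k − 1} for all k ≥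 0. -/

import Mathlib

open RealInnerProductSpace Filter Metric Set

/-- A set-valued operator `T : H ⇉ H` is monotone if `⟨u - v, y - x⟩ ≥ 0` whenever
`u ∈ T y` and `v ∈ T x`; it is maximal monotone if moreover every pair `(x, u)` that is
monotonically related to the graph of `T` belongs to the graph of `T`. -/
def IsMaximalMonotone {H : Type*} [NormedAddCommGroup H] [InnerProductSpace ℝ H]
    (T : H → Set H) : Prop :=
  (∀ x y u v : H, u ∈ T y → v ∈ T x → 0 ≤ ⟪u - v, y - x⟫) ∧
  (∀ x u : H, (∀ y v : H, v ∈ T y → 0 ≤ ⟪u - v, x - y⟫) → u ∈ T x)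

/-!
The Newton step satisfies `‖x_{k+1} - x*‖ ≤ |n_f(‖x_k - x*‖)|`. Indeed, monotonicity of `T` tested
against the solution gives `⟨F'(x_k) u, u⟩ ≤ ⟨E, u⟩` for `u = x_{k+1} - x*` and the linearization
error `E = F(x*) - F(x_k) - F'(x_k)(x* - x_k)`; the coercivity `‖u‖² ≤ ‖F̂'(x*)⁻¹‖ ⟨F'(x*) u, u⟩`
turns this into a quadratic inequality for `‖u‖`, whose coefficients `E` and `F'(x_k) - F'(x*)` are
bounded through the majorant condition by `t f'(t) - f(t)` and `f'(t) + 1`, `t = ‖x_k - x*‖`.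

Convexity of `f'` makes `|n_f(t)| / t²` nondecreasing, so `|n_f|` is monotone and
`|n_f(t)| ≤ (t₁ / t₀²) t²` on `[0, t₀]`, while the definition of `ρ` gives `t₁ ≤ t₀`. Induction then
yields `‖x* - x_k‖ ≤ t_k ≤ t₀ (t₁ / t₀)^(2^k - 1)`.
-/

lemma le_of_hasDerivWithinAt_Icc_nonneg {φ φ' : ℝ → ℝ} {a b : ℝ} (hab : a ≤ b)
    (hφ : ∀ x ∈ Icc a b, HasDerivWithinAt φ (φ' x) (Icc a b) x)
    (hφ' : ∀ x ∈ Ioo a b, 0 ≤ φ' x) : φ a ≤ φ b := by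
  refine monotoneOn_of_hasDerivWithinAt_nonneg (f' := φ') (convex_Icc a b)
    (fun x hx => (hφ x hx).continuousWithinAt) (fun x hx => ?_) (fun x hx => ?_)
    (left_mem_Icc.2 hab) (right_mem_Icc.2 hab) hab
  · rw [interior_Icc] at hx ⊢
    exact (hφ x (Ioo_subset_Icc_self hx)).mono Ioo_subset_Icc_self
  · exact hφ' x (by rwa [interior_Icc] at hx)

/-- The hypothesis `0 ≤ t` accounts for the junk value `sSup ∅ = 0`. -/
lemma exists_mem_lt_of_lt_sSup {S : Set ℝ} {t : ℝ} (ht0 : 0 ≤ t) (ht : t < sSup S) :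
    ∃ s ∈ S, t < s := by
  rcases S.eq_empty_or_nonempty with rfl | hS
  · rw [Real.sSup_empty] at ht
    exact absurd ht0 (not_le.2 ht)
  · exact exists_lt_of_lt_csSup hS ht

lemma ball_sSup_subset {E : Type*} [PseudoMetricSpace E] {x : E} {S : Set ℝ} {Ω : Set E}
    (hS : ∀ u ∈ S, ball x u ⊆ Ω) : ball x (sSup S) ⊆ Ω := fun y hy => by
  obtain ⟨u, hu, hyu⟩ := exists_mem_lt_of_lt_sSup dist_nonneg hy
  exact hS u hu hyu

lemma ConvexOn.slope_le_slope_of_le {S : Set ℝ} {g : ℝ → ℝ} (hg : ConvexOn ℝ S g)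
    {a b c d : ℝ} (ha : a ∈ S) (hb : b ∈ S) (hc : c ∈ S) (hd : d ∈ S)
    (hab : a < b) (hcd : c < d) (hac : a ≤ c) (hbd : b ≤ d) :
    (g b - g a) / (b - a) ≤ (g d - g c) / (d - c) :=
  calc (g b - g a) / (b - a) ≤ (g d - g a) / (d - a) :=
        hg.secant_mono ha hb hd hab.ne' (hab.trans_le hbd).ne' hbd
    _ = (g a - g d) / (a - d) := by rw [← neg_div_neg_eq, neg_sub, neg_sub]
    _ ≤ (g c - g d) / (c - d) := hg.secant_mono hd ha hc (hab.trans_le hbd).ne hcd.ne hac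
    _ = (g d - g c) / (d - c) := by rw [← neg_div_neg_eq, neg_sub, neg_sub]

lemma ConvexOn.sub_le_mul_sub_of_le_one {R : ℝ} {g : ℝ → ℝ} (hg : ConvexOn ℝ (Ico 0 R) g)
    {c x t : ℝ} (hc0 : 0 < c) (hc1 : c ≤ 1) (hx : 0 ≤ x) (hxt : x < t) (ht : t < R) :
    g (c * t) - g (c * x) ≤ c * (g t - g x) := by
  have hmem : ∀ y ∈ Icc 0 t, y ∈ Ico 0 R := fun y hy => ⟨hy.1, hy.2.trans_lt ht⟩
  have hslope := hg.slope_le_slope_of_le (a := c * x) (b := c * t) (c := x) (d := t)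
    (hmem _ ⟨mul_nonneg hc0.le hx, (mul_le_of_le_one_left hx hc1).trans hxt.le⟩)
    (hmem _ ⟨mul_nonneg hc0.le (hx.trans hxt.le), mul_le_of_le_one_left (hx.trans hxt.le) hc1⟩)
    (hmem x ⟨hx, hxt.le⟩) (hmem t ⟨hx.trans hxt.le, le_rfl⟩)
    (mul_lt_mul_of_pos_left hxt hc0) hxt (mul_le_of_le_one_left hx hc1)
    (mul_le_of_le_one_left (hx.trans hxt.le) hc1)
  rw [div_le_div_iff₀ (by nlinarith) (sub_pos.2 hxt)] at hslope
  refine le_of_mul_le_mul_right ?_ (sub_pos.2 hxt)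
  linarith

lemma le_and_deriv_neg_of_eq_sSup {R ν : ℝ} {f' : ℝ → ℝ} (hmono : MonotoneOn f' (Ico 0 R))
    (hν : ν = sSup {u | u ∈ Ico 0 R ∧ f' u < 0}) (hν0 : 0 < ν) :
    ν ≤ R ∧ ∀ t ∈ Ico 0 ν, f' t < 0 := by
  obtain ⟨u, hu, -⟩ := exists_mem_lt_of_lt_sSup le_rfl (hν ▸ hν0)
  refine ⟨hν ▸ csSup_le ⟨u, hu⟩ fun v hv => hv.1.2.le, fun t ht => ?_⟩
  obtain ⟨v, ⟨hv, hfv⟩, htv⟩ := exists_mem_lt_of_lt_sSup ht.1 (hν ▸ ht.2)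
  exact (hmono ⟨ht.1, htv.trans hv.2⟩ hv htv.le).trans_lt hfv

/-- The paper's `n_f`; the majorizing sequence is `t_{k+1} = |n_f t_k|`. -/
noncomputable def newtonMap (f f' : ℝ → ℝ) (t : ℝ) : ℝ := t - f t / f' t

section Majorant

variable {R : ℝ} {f f' : ℝ → ℝ}
  (hf : ∀ t ∈ Ico 0 R, HasDerivWithinAt f (f' t) (Ico 0 R) t)
include hf

lemma hasDerivWithinAt_Icc_of_Ico {t : ℝ} (ht : t < R) :
    ∀ x ∈ Icc 0 t, HasDerivWithinAt f (f' x) (Icc 0 t) x := fun x hx =>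
  (hf x ⟨hx.1, hx.2.trans_lt ht⟩).mono (Icc_subset_Ico_right ht)

lemma le_mul_of_monotoneOn_deriv (hf0 : f 0 = 0) (hmono : MonotoneOn f' (Ico 0 R))
    {t : ℝ} (ht : t ∈ Ico 0 R) : f t ≤ t * f' t := by
  have key := le_of_hasDerivWithinAt_Icc_nonneg (φ := fun x => x * f' t - f x)
    (φ' := fun x => f' t - f' x) ht.1
    (fun x hx => (((hasDerivWithinAt_id x _).mul_const (f' t)).sub
      (hasDerivWithinAt_Icc_of_Ico hf ht.2 x hx)).congr_deriv (by simp))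
    (fun x hx => sub_nonneg.2 (hmono ⟨hx.1.le, hx.2.trans ht.2⟩ ht hx.2.le))
  simp only [zero_mul, hf0, sub_zero] at key
  linarith

/-- With `c = s / t`, the function `x ↦ c² (x f'(t) - f x) - (c x f'(c t) - f (c x))` vanishes at
`0` and is nondecreasing on `[0, t]` by convexity of `f'`; its value at `t` is the claim. -/
lemma monotoneOn_mul_deriv_sub_div_sq (hf0 : f 0 = 0) (hconv : ConvexOn ℝ (Ico 0 R) f') :
    MonotoneOn (fun t => (t * f' t - f t) / t ^ 2) (Ioo 0 R) := by
  intro s hs t ht hst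
  set c := s / t
  have ht0 : 0 < t := hs.1.trans_le hst
  have hc0 : 0 < c := div_pos hs.1 ht0
  have hc1 : c ≤ 1 := (div_le_one ht0).2 hst
  have hct : c * t = s := div_mul_cancel₀ s ht0.ne'
  have hmaps : MapsTo (c * ·) (Icc 0 t) (Icc 0 t) := fun x hx =>
    ⟨mul_nonneg hc0.le hx.1, (mul_le_of_le_one_left hx.1 hc1).trans hx.2⟩
  have hfI := hasDerivWithinAt_Icc_of_Ico hf ht.2
  have key := le_of_hasDerivWithinAt_Icc_nonneg ht0.le
    (φ := fun x => c ^ 2 * (x * f' t - f x) - (c * x * f' (c * t) - f (c * x)))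
    (φ' := fun x => c ^ 2 * (f' t - f' x) - (c * f' (c * t) - f' (c * x) * c))
    (fun x hx => by
      have hscaled : HasDerivWithinAt (fun x => f (c * x)) (f' (c * x) * c) (Icc 0 t) x :=
        (hfI (c * x) (hmaps hx)).comp x ((hasDerivWithinAt_id x _).const_mul c |>.congr_deriv
          (mul_one c)) hmaps
      exact ((((hasDerivWithinAt_id x _).mul_const (f' t)).sub (hfI x hx)).const_mul (c ^ 2)
        |>.sub ((((hasDerivWithinAt_id x _).const_mul c).mul_const (f' (c * t))).sub hscaled))
        |>.congr_deriv (by simp))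
    (fun x hx => by
      nlinarith [mul_le_mul_of_nonneg_left
        (hconv.sub_le_mul_sub_of_le_one hc0 hc1 hx.1.le hx.2 ht.2) hc0.le])
  simp only [zero_mul, mul_zero, hf0, sub_zero, hct] at key
  have hs2 : s ^ 2 = c ^ 2 * t ^ 2 := by rw [← hct]; ring
  rw [div_le_div_iff₀ (pow_pos hs.1 2) (pow_pos ht0 2), hs2]
  nlinarith [mul_le_mul_of_nonneg_right (sub_nonneg.2 key) (sq_nonneg t)]

variable {ν : ℝ} (hf0 : f 0 = 0) (hmono : MonotoneOn f' (Ico 0 R)) (hνR : ν ≤ R)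
  (hneg : ∀ t ∈ Ico 0 ν, f' t < 0)
include hf0 hmono hνR hneg

lemma abs_newtonMap_eq {t : ℝ} (ht : t ∈ Ico 0 ν) :
    |newtonMap f f' t| = (t * f' t - f t) / -f' t := by
  have hft := hneg t ht
  have hle := le_mul_of_monotoneOn_deriv hf hf0 hmono ⟨ht.1, ht.2.trans_le hνR⟩
  rw [newtonMap, show t - f t / f' t = (t * f' t - f t) / f' t by
      rw [sub_div, mul_div_cancel_right₀ _ hft.ne], abs_div,
    abs_of_nonneg (by linarith), abs_of_neg hft]

lemma monotoneOn_abs_newtonMap_div_sq (hconv : ConvexOn ℝ (Ico 0 R) f') :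
    MonotoneOn (fun t => |newtonMap f f' t| / t ^ 2) (Ioo 0 ν) := by
  have hinv : MonotoneOn (fun t => 1 / -f' t) (Ioo 0 ν) := fun s hs t ht hst =>
    one_div_le_one_div_of_le (neg_pos.2 (hneg t (Ioo_subset_Ico_self ht)))
      (neg_le_neg (hmono ⟨hs.1.le, hs.2.trans_le hνR⟩ ⟨ht.1.le, ht.2.trans_le hνR⟩ hst))
  refine (((monotoneOn_mul_deriv_sub_div_sq hf hf0 hconv).mono
    (Ioo_subset_Ioo_right hνR)).mul hinv (fun t ht => ?_) (fun t ht => ?_)).congr (fun t ht => ?_)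
  · exact div_nonneg (sub_nonneg.2 (le_mul_of_monotoneOn_deriv hf hf0 hmono
      ⟨ht.1.le, ht.2.trans_le hνR⟩)) (sq_nonneg t)
  · exact one_div_nonneg.2 (neg_nonneg.2 (hneg t (Ioo_subset_Ico_self ht)).le)
  · simp only [Pi.mul_apply]
    rw [abs_newtonMap_eq hf hf0 hmono hνR hneg (Ioo_subset_Ico_self ht)]
    ring

lemma abs_newtonMap_lt_self {s : ℝ} (hs : s ∈ Ioo 0 ν) (hρ : f s / (s * f' s) - 1 < 1) :
    |newtonMap f f' s| < s := by
  have hfs := hneg s (Ioo_subset_Ico_self hs)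
  rw [abs_newtonMap_eq hf hf0 hmono hνR hneg (Ioo_subset_Ico_self hs), div_lt_iff₀ (neg_pos.2 hfs)]
  rw [sub_lt_iff_lt_add, div_lt_iff_of_neg (mul_neg_of_pos_of_neg hs.1 hfs)] at hρ
  linarith

end Majorant

section QuadraticRate

variable {n : ℝ → ℝ} {b : ℝ} (hn0 : n 0 = 0) (hq : MonotoneOn (fun s => n s / s ^ 2) (Ioc 0 b))
include hn0 hq

lemma le_div_sq_mul_sq {s : ℝ} (hs : s ∈ Icc 0 b) : n s ≤ n b / b ^ 2 * s ^ 2 := by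
  rcases hs.1.eq_or_lt with rfl | hs0
  · simp [hn0]
  · have := hq ⟨hs0, hs.2⟩ ⟨hs0.trans_le hs.2, le_rfl⟩ hs.2
    rwa [div_le_iff₀ (pow_pos hs0 2)] at this

lemma monotoneOn_Icc_of_div_sq (hnn : ∀ s ∈ Ioc 0 b, 0 ≤ n s) : MonotoneOn n (Icc 0 b) := by
  intro s hs t ht hst
  rcases ht.1.eq_or_lt with rfl | ht0
  · rw [le_antisymm hst hs.1]
  · calc n s ≤ n t / t ^ 2 * s ^ 2 :=
          le_div_sq_mul_sq hn0 (hq.mono (Ioc_subset_Ioc_right ht.2)) ⟨hs.1, hst⟩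
      _ ≤ n t / t ^ 2 * t ^ 2 := by
          gcongr
          · exact div_nonneg (hnn t ⟨ht0, ht.2⟩) (sq_nonneg t)
          · exact hs.1
      _ = n t := div_mul_cancel₀ _ (pow_pos ht0 2).ne'

lemma apply_le_self_of_mem_Icc (hb : n b ≤ b) {s : ℝ} (hs : s ∈ Icc 0 b) : n s ≤ s := by
  rcases hs.1.eq_or_lt with rfl | hs0
  · exact hn0.le
  · have hb0 := hs0.trans_le hs.2
    calc n s ≤ n b / b ^ 2 * s ^ 2 := le_div_sq_mul_sq hn0 hq hs
      _ ≤ b / b ^ 2 * (b * s) := by gcongr; nlinarith [hs.2]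
      _ = s := by field_simp

end QuadraticRate

lemma le_mul_pow_two_pow_sub_one {n : ℝ → ℝ} {e t : ℕ → ℝ} (ht0 : 0 < t 0) (hn0 : n 0 = 0)
    (hnn : ∀ s ∈ Ioc 0 (t 0), 0 ≤ n s) (hq : MonotoneOn (fun s => n s / s ^ 2) (Ioc 0 (t 0)))
    (hle : n (t 0) ≤ t 0) (ht : ∀ k, t (k + 1) = n (t k))
    (he_nonneg : ∀ k, 0 ≤ e k) (he0 : e 0 ≤ t 0) (he : ∀ k, e k ≤ t 0 → e (k + 1) ≤ n (e k))
    (k : ℕ) : e k ≤ t 0 * (t 1 / t 0) ^ (2 ^ k - 1) := by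
  set d := t 1 / t 0
  have hd0 : 0 ≤ d := div_nonneg (ht 0 ▸ hnn _ ⟨ht0, le_rfl⟩) ht0.le
  have hd1 : d ≤ 1 := div_le_one_of_le₀ (ht 0 ▸ hle) ht0.le
  have hd : d * t 0 = t 1 := div_mul_cancel₀ _ ht0.ne'
  have hmono := monotoneOn_Icc_of_div_sq hn0 hq hnn
  suffices h : ∀ k, e k ≤ t k ∧ t k ≤ t 0 * d ^ (2 ^ k - 1) from (h k).1.trans (h k).2
  intro k
  induction k with
  | zero => simp [he0]
  | succ k ih =>
    obtain ⟨hek, htk⟩ := ih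
    have htk0 : t k ≤ t 0 := htk.trans (mul_le_of_le_one_right ht0.le (pow_le_one₀ hd0 hd1))
    have hmem : t k ∈ Icc 0 (t 0) := ⟨(he_nonneg k).trans hek, htk0⟩
    refine ⟨?_, ?_⟩
    · calc e (k + 1) ≤ n (e k) := he k (hek.trans htk0)
        _ ≤ n (t k) := hmono ⟨he_nonneg k, hek.trans htk0⟩ hmem hek
        _ = t (k + 1) := (ht k).symm
    · have hexp : 2 ^ (k + 1) - 1 = 2 * (2 ^ k - 1) + 1 := by
        have := Nat.one_le_two_pow (n := k)
        rw [pow_succ]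
        omega
      calc t (k + 1) = n (t k) := ht k
        _ ≤ n (t 0) / t 0 ^ 2 * t k ^ 2 := le_div_sq_mul_sq hn0 hq hmem
        _ ≤ n (t 0) / t 0 ^ 2 * (t 0 * d ^ (2 ^ k - 1)) ^ 2 := by
            gcongr
            · exact div_nonneg (hnn _ ⟨ht0, le_rfl⟩) (sq_nonneg _)
            · exact hmem.1
        _ = t 0 * d ^ (2 ^ (k + 1) - 1) := by
            rw [hexp, pow_add, pow_mul, pow_one, ← ht 0, ← hd]
            field_simp
            ring

section Remainder

variable {E V : Type*} [NormedAddCommGroup E] [NormedSpace ℝ E] [NormedAddCommGroup V]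
  [NormedSpace ℝ V]

lemma norm_remainder_le_of_majorant {F : E → V} {F' : E → E →L[ℝ] V} {f f' : ℝ → ℝ}
    {xs y : E} {β : ℝ} (hβ : 0 ≤ β)
    (hF : ∀ τ ∈ Icc (0 : ℝ) 1, HasFDerivAt F (F' (xs + τ • (y - xs))) (xs + τ • (y - xs)))
    (hf : ∀ t ∈ Icc 0 ‖y - xs‖, HasDerivWithinAt f (f' t) (Icc 0 ‖y - xs‖) t) (hf0 : f 0 = 0)
    (hmaj : ∀ τ ∈ Icc (0 : ℝ) 1,
      β * ‖F' y - F' (xs + τ • (y - xs))‖ ≤ f' ‖y - xs‖ - f' (τ * ‖y - xs‖)) :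
    β * ‖F xs - F y - F' y (xs - y)‖ ≤ ‖y - xs‖ * f' ‖y - xs‖ - f ‖y - xs‖ := by
  set a := ‖y - xs‖
  set p : ℝ → E := fun σ => xs + (1 - σ) • (y - xs)
  have hτ : ∀ σ ∈ Icc (0 : ℝ) 1, 1 - σ ∈ Icc (0 : ℝ) 1 := fun σ hσ =>
    ⟨sub_nonneg.2 hσ.2, sub_le_self 1 hσ.1⟩
  have hg : ∀ σ ∈ Icc (0 : ℝ) 1, HasDerivAt
      (fun σ => β • (F (p σ) - F y - σ • F' y (xs - y))) (β • (F' (p σ) - F' y) (xs - y)) σ := by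
    intro σ hσ
    have hp : HasDerivAt p (xs - y) σ :=
      (((hasDerivAt_id σ).const_sub 1).smul_const (y - xs)).const_add xs |>.congr_deriv
        (by simp)
    exact ((((hF _ (hτ σ hσ)).comp_hasDerivAt σ hp).sub_const (F y)).sub
      ((hasDerivAt_id σ).smul_const (F' y (xs - y)))).const_smul β |>.congr_deriv
        (by rw [one_smul, sub_apply])
  have hB : ∀ σ ∈ Icc (0 : ℝ) 1, HasDerivWithinAt (fun σ => σ * (a * f' a) + f ((1 - σ) * a) - f a)
      (a * f' a - f' ((1 - σ) * a) * a) (Icc 0 1) σ := by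
    intro σ hσ
    have hmaps : MapsTo (fun σ => (1 - σ) * a) (Icc 0 1) (Icc 0 a) := fun σ hσ =>
      ⟨mul_nonneg (hτ σ hσ).1 (norm_nonneg _), mul_le_of_le_one_left (norm_nonneg _) (hτ σ hσ).2⟩
    have hfσ := (hf _ (hmaps hσ)).comp σ (((hasDerivWithinAt_id σ _).const_sub 1).mul_const a) hmaps
    exact ((((hasDerivWithinAt_id σ _).mul_const (a * f' a)).add hfσ).sub_const (f a)).congr_deriv
      (by ring)
  have hbound : ∀ σ ∈ Ico (0 : ℝ) 1,
      ‖β • (F' (p σ) - F' y) (xs - y)‖ ≤ a * f' a - f' ((1 - σ) * a) * a := fun σ hσ =>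
    calc ‖β • (F' (p σ) - F' y) (xs - y)‖ ≤ β * ‖F' y - F' (p σ)‖ * a := by
          rw [norm_smul, Real.norm_of_nonneg hβ, mul_assoc, norm_sub_rev (F' y)]
          exact mul_le_mul_of_nonneg_left (((F' (p σ) - F' y).le_opNorm _).trans_eq
            (by rw [norm_sub_rev xs])) hβ
      _ ≤ (f' a - f' ((1 - σ) * a)) * a :=
          mul_le_mul_of_nonneg_right (hmaj (1 - σ) (hτ σ (Ico_subset_Icc_self hσ))) (norm_nonneg _)
      _ = a * f' a - f' ((1 - σ) * a) * a := by ring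
  have key := image_norm_le_of_norm_deriv_right_le_deriv_boundary'
    (fun σ hσ => (hg σ hσ).continuousAt.continuousWithinAt)
    (fun σ hσ => (hg σ (Ico_subset_Icc_self hσ)).hasDerivWithinAt)
    (by simp [p]) (fun σ hσ => (hB σ hσ).continuousWithinAt)
    (fun σ hσ => (hB σ (Ico_subset_Icc_self hσ)).mono_of_mem_nhdsWithin
      (mem_of_superset (Icc_mem_nhdsGE hσ.2) (Icc_subset_Icc_left hσ.1)))
    hbound (right_mem_Icc.2 zero_le_one)
  simpa [p, norm_smul, Real.norm_of_nonneg hβ, hf0] using key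

end Remainder

section Operator

variable {H : Type*} [NormedAddCommGroup H] [InnerProductSpace ℝ H]

lemma norm_sq_le_opNorm_mul_inner [CompleteSpace H] {L G : H →L[ℝ] H}
    (hL : ∀ y, 0 ≤ ⟪L y, y⟫)
    (hG : ((1 / 2 : ℝ) • (L + ContinuousLinearMap.adjoint L)).comp G = ContinuousLinearMap.id ℝ H)
    (u : H) : ‖u‖ ^ 2 ≤ ‖G‖ * ⟪L u, u⟫ := by
  have hAG : ∀ v, ⟪L (G u), v⟫ + ⟪L v, G u⟫ = 2 * ⟪u, v⟫ := fun v => by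
    have := congr(⟪$hG u, v⟫)
    simp only [ContinuousLinearMap.comp_apply, smul_apply, add_apply,
      ContinuousLinearMap.id_apply, real_inner_smul_left, inner_add_left,
      ContinuousLinearMap.adjoint_inner_left] at this
    rw [real_inner_comm (L v)] at this
    linarith
  have hLG : ⟪L u, G u⟫ + ⟪L (G u), u⟫ = 2 * ‖u‖ ^ 2 := by
    rw [add_comm, hAG u, real_inner_self_eq_norm_sq]
  have hGG : ⟪L (G u), G u⟫ ≤ ‖G‖ * ‖u‖ ^ 2 := by
    calc ⟪L (G u), G u⟫ = ⟪u, G u⟫ := by linarith [hAG (G u)]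
      _ ≤ ‖u‖ * (‖G‖ * ‖u‖) :=
          (real_inner_le_norm _ _).trans (mul_le_mul_of_nonneg_left (G.le_opNorm u) (norm_nonneg u))
      _ = ‖G‖ * ‖u‖ ^ 2 := by ring
  have hquad : ∀ θ : ℝ, 0 ≤ (‖G‖ * ‖u‖ ^ 2) * (θ * θ) + (-2 * ‖u‖ ^ 2) * θ + ⟪L u, u⟫ := by
    intro θ
    have := hL (u - θ • G u)
    simp only [map_sub, map_smul, inner_sub_left, inner_sub_right, real_inner_smul_left,
      real_inner_smul_right] at this
    nlinarith [mul_le_mul_of_nonneg_right hGG (mul_self_nonneg θ), congrArg (θ * ·) hLG]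
  have hdisc := discrim_le_zero hquad
  rw [discrim] at hdisc
  rcases (sq_nonneg ‖u‖).eq_or_lt with hu | hu
  · rw [← hu]
    exact mul_nonneg (norm_nonneg G) (hL u)
  · nlinarith

variable {T : H → Set H} {F : H → H} {F' : H → H →L[ℝ] H} {xs y z : H}

lemma inner_le_inner_remainder_of_monotone
    (hT : ∀ x y u v : H, u ∈ T y → v ∈ T x → 0 ≤ ⟪u - v, y - x⟫)
    (hs : (0 : H) ∈ (fun w => F xs + w) '' T xs)
    (hz : (0 : H) ∈ (fun w => F y + F' y (z - y) + w) '' T z) :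
    ⟪F' y (z - xs), z - xs⟫ ≤ ⟪F xs - F y - F' y (xs - y), z - xs⟫ := by
  obtain ⟨v, hv, hv0⟩ := hs
  obtain ⟨w, hw, hw0⟩ := hz
  have hmono := hT xs z w v hw hv
  rw [eq_neg_of_add_eq_zero_right hw0, eq_neg_of_add_eq_zero_right hv0] at hmono
  have hsplit : -(F y + F' y (z - y)) - -F xs = (F xs - F y - F' y (xs - y)) - F' y (z - xs) := by
    have : z - y = (z - xs) + (xs - y) := by abel
    rw [this, map_add]
    abel
  rw [hsplit, inner_sub_left] at hmono
  linarith

lemma norm_sub_le_of_newton_step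
    (hT : ∀ x y u v : H, u ∈ T y → v ∈ T x → 0 ≤ ⟪u - v, y - x⟫)
    (hs : (0 : H) ∈ (fun w => F xs + w) '' T xs)
    (hz : (0 : H) ∈ (fun w => F y + F' y (z - y) + w) '' T z)
    {β c m : ℝ} (hβ : 0 ≤ β) (hcoer : ∀ u, ‖u‖ ^ 2 ≤ β * ⟪F' xs u, u⟫)
    (hrem : β * ‖F xs - F y - F' y (xs - y)‖ ≤ c) (hder : β * ‖F' y - F' xs‖ ≤ m + 1)
    (hm : m < 0) : ‖z - xs‖ ≤ c / -m := by
  set u := z - xs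
  set E := F xs - F y - F' y (xs - y)
  have hc : 0 ≤ c := (mul_nonneg hβ (norm_nonneg E)).trans hrem
  have hdiff : ⟪(F' xs - F' y) u, u⟫ ≤ ‖F' y - F' xs‖ * ‖u‖ ^ 2 := by
    calc ⟪(F' xs - F' y) u, u⟫ ≤ ‖F' xs - F' y‖ * ‖u‖ * ‖u‖ :=
          (real_inner_le_norm _ _).trans
            (mul_le_mul_of_nonneg_right ((F' xs - F' y).le_opNorm u) (norm_nonneg u))
      _ = ‖F' y - F' xs‖ * ‖u‖ ^ 2 := by rw [norm_sub_rev]; ring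
  have key : ‖u‖ ^ 2 ≤ c * ‖u‖ + (m + 1) * ‖u‖ ^ 2 :=
    calc ‖u‖ ^ 2 ≤ β * ⟪F' xs u, u⟫ := hcoer u
      _ = β * ⟪F' y u, u⟫ + β * ⟪(F' xs - F' y) u, u⟫ := by
          rw [sub_apply, inner_sub_left]; ring
      _ ≤ β * ‖E‖ * ‖u‖ + β * ‖F' y - F' xs‖ * ‖u‖ ^ 2 := by
          rw [mul_assoc, mul_assoc]
          gcongr
          · exact (inner_le_inner_remainder_of_monotone hT hs hz).trans (real_inner_le_norm _ _)
      _ ≤ c * ‖u‖ + (m + 1) * ‖u‖ ^ 2 := by gcongr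
  rw [le_div_iff₀ (neg_pos.2 hm)]
  rcases (norm_nonneg u).eq_or_lt with hu | hu
  · rw [← hu]; linarith
  · nlinarith

lemma norm_sub_le_abs_newtonMap [CompleteSpace H] {G : H →L[ℝ] H} {R κ ν : ℝ} {f f' : ℝ → ℝ}
    (hT : ∀ x y u v : H, u ∈ T y → v ∈ T x → 0 ≤ ⟪u - v, y - x⟫)
    (hs : (0 : H) ∈ (fun w => F xs + w) '' T xs)
    (hz : (0 : H) ∈ (fun w => F y + F' y (z - y) + w) '' T z)
    (hpsd : ∀ u, 0 ≤ ⟪F' xs u, u⟫)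
    (hG : ((1 / 2 : ℝ) • (F' xs + ContinuousLinearMap.adjoint (F' xs))).comp G =
      ContinuousLinearMap.id ℝ H)
    (hF : ∀ x ∈ ball xs κ, HasFDerivAt F (F' x) x)
    (hf : ∀ t ∈ Ico 0 R, HasDerivWithinAt f (f' t) (Ico 0 R) t) (hf0 : f 0 = 0)
    (hf'0 : f' 0 = -1) (hmono : MonotoneOn f' (Ico 0 R)) (hνR : ν ≤ R)
    (hneg : ∀ t ∈ Ico 0 ν, f' t < 0)
    (hmaj : ∀ τ ∈ Icc (0 : ℝ) 1,
      ‖G‖ * ‖F' y - F' (xs + τ • (y - xs))‖ ≤ f' ‖y - xs‖ - f' (τ * ‖y - xs‖))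
    (hyκ : y ∈ ball xs κ) (hyν : ‖y - xs‖ < ν) :
    ‖z - xs‖ ≤ |newtonMap f f' ‖y - xs‖| := by
  have ha : ‖y - xs‖ ∈ Ico 0 ν := ⟨norm_nonneg _, hyν⟩
  rw [abs_newtonMap_eq hf hf0 hmono hνR hneg ha]
  refine norm_sub_le_of_newton_step hT hs hz (norm_nonneg G)
    (norm_sq_le_opNorm_mul_inner hpsd hG) ?_ ?_ (hneg _ ha)
  · exact norm_remainder_le_of_majorant (norm_nonneg G)
      (fun τ hτ => hF _ ((convex_ball xs κ).add_smul_sub_mem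
        (mem_ball_self (dist_nonneg.trans_lt hyκ)) hyκ hτ))
      (hasDerivWithinAt_Icc_of_Ico hf (hyν.trans_le hνR)) hf0 hmaj
  · simpa [hf'0] using hmaj 0 ⟨le_rfl, zero_le_one⟩

end Operator

theorem newton_sequence_explicit_rate_general {H : Type*} [NormedAddCommGroup H] [InnerProductSpace ℝ H] [CompleteSpace H]
    (Ω : Set H) (F : H → H) (F' : H → H →L[ℝ] H)
    (hFd : ∀ x ∈ Ω, HasFDerivAt F (F' x) x)
    (xs : H)
    (T : H → Set H) (hT : IsMaximalMonotone T)
    (hsol : (0 : H) ∈ (fun w => F xs + w) '' T xs)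
    (hpsd : ∀ y : H, 0 ≤ ⟪(F' xs) y, y⟫)
    (Ahat : H →L[ℝ] H)
    (hAhat : Ahat = (1 / 2 : ℝ) • (F' xs + ContinuousLinearMap.adjoint (F' xs)))
    (Ginv : H →L[ℝ] H)
    (hGinv2 : Ahat.comp Ginv = ContinuousLinearMap.id ℝ H)
    (R : ℝ) (κ : ℝ)
    (hκ : κ = sSup {u : ℝ | u ∈ Set.Ico (0 : ℝ) R ∧ Metric.ball xs u ⊆ Ω})
    (f f' : ℝ → ℝ)
    (hfd1 : ∀ t ∈ Set.Ico (0 : ℝ) R, HasDerivWithinAt f (f' t) (Set.Ico (0 : ℝ) R) t)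
    (hf0 : f 0 = 0) (hf'0 : f' 0 = -1)
    (hfconv : ConvexOn ℝ (Set.Ico (0 : ℝ) R) f')
    (hfmono : StrictMonoOn f' (Set.Ico (0 : ℝ) R))
    (hmaj : ∀ τ ∈ Set.Icc (0 : ℝ) 1, ∀ x ∈ Metric.ball xs κ,
      ‖Ginv‖ * ‖F' x - F' (xs + τ • (x - xs))‖ ≤ f' ‖x - xs‖ - f' (τ * ‖x - xs‖))
    (ν : ℝ) (hν : ν = sSup {u : ℝ | u ∈ Set.Ico (0 : ℝ) R ∧ f' u < 0})
    (ρ : ℝ) (hρ : ρ = sSup {u : ℝ | u ∈ Set.Ioo (0 : ℝ) ν ∧ f u / (u * f' u) - 1 < 1})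
    (r : ℝ) (hr : r = min κ ρ)
    (xseq : ℕ → H) (hx0 : xseq 0 ∈ Metric.ball xs r) (hx0ne : xseq 0 ≠ xs)
    (hNewton : ∀ k : ℕ, (0 : H) ∈
      (fun w => F (xseq k) + (F' (xseq k)) (xseq (k + 1) - xseq k) + w) '' T (xseq (k + 1)))
    (tseq : ℕ → ℝ) (ht0 : tseq 0 = ‖xs - xseq 0‖)
    (htk : ∀ k : ℕ, tseq (k + 1) = |tseq k - f (tseq k) / f' (tseq k)|)
    :
    ∀ k : ℕ, ‖xs - xseq k‖ ≤ tseq 0 * (tseq 1 / tseq 0) ^ (2 ^ k - 1) := by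
  subst hAhat
  have hmono := hfmono.monotoneOn
  have ht0pos : 0 < tseq 0 := ht0 ▸ norm_pos_iff.2 (sub_ne_zero.2 (Ne.symm hx0ne))
  obtain ⟨ht0κ, ht0ρ⟩ : tseq 0 < κ ∧ tseq 0 < ρ := by
    rw [← lt_min_iff, ← hr, ht0, ← dist_eq_norm, dist_comm]
    exact hx0
  obtain ⟨s, ⟨⟨hs0, hsν⟩, hsρ⟩, hts⟩ := exists_mem_lt_of_lt_sSup ht0pos.le (hρ ▸ ht0ρ)
  obtain ⟨hνR, hneg⟩ := le_and_deriv_neg_of_eq_sSup hmono hν (hs0.trans hsν)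
  have hball : ball xs κ ⊆ Ω := hκ ▸ ball_sSup_subset fun u hu => hu.2
  have hq := monotoneOn_abs_newtonMap_div_sq hfd1 hf0 hmono hνR hneg hfconv
  have hn0 : |newtonMap f f' 0| = 0 := by simp [newtonMap, hf0]
  have hle : |newtonMap f f' (tseq 0)| ≤ tseq 0 :=
    apply_le_self_of_mem_Icc hn0 (hq.mono (Ioc_subset_Ioo_right hsν))
      (abs_newtonMap_lt_self hfd1 hf0 hmono hνR hneg ⟨hs0, hsν⟩ hsρ).le ⟨ht0pos.le, hts.le⟩
  refine le_mul_pow_two_pow_sub_one (n := fun t => |newtonMap f f' t|)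
    (e := fun k => ‖xs - xseq k‖) ht0pos hn0 (fun _ _ => abs_nonneg _)
    (hq.mono (Ioc_subset_Ioo_right (hts.trans hsν))) hle htk (fun _ => norm_nonneg _) ht0.ge
    fun k hk => ?_
  rw [norm_sub_rev] at hk
  have hyκ : xseq k ∈ ball xs κ := by rw [mem_ball, dist_eq_norm]; exact hk.trans_lt ht0κ
  rw [norm_sub_rev xs, norm_sub_rev xs]
  exact norm_sub_le_abs_newtonMap hT.1 hsol (hNewton k) hpsd hGinv2 (fun x hx => hFd x (hball hx))
    hfd1 hf0 hf'0 hmono hνR hneg (fun τ hτ => hmaj τ hτ _ hyκ) hyκ (hk.trans_lt (hts.trans hsν))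

theorem newton_sequence_explicit_rate {H : Type*} [NormedAddCommGroup H] [InnerProductSpace ℝ H] [CompleteSpace H]
    (Ω : Set H) (hΩ : IsOpen Ω) (F : H → H) (F' : H → H →L[ℝ] H)
    (hFd : ∀ x ∈ Ω, HasFDerivAt F (F' x) x) (hF'c : ContinuousOn F' Ω)
    (xs : H) (hxs : xs ∈ Ω)
    (T : H → Set H) (hT : IsMaximalMonotone T)
    (hsol : (0 : H) ∈ (fun w => F xs + w) '' T xs)
    (hpsd : ∀ y : H, 0 ≤ ⟪(F' xs) y, y⟫)
    (Ahat : H →L[ℝ] H)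
    (hAhat : Ahat = (1 / 2 : ℝ) • (F' xs + ContinuousLinearMap.adjoint (F' xs)))
    (Ginv : H →L[ℝ] H)
    (hGinv1 : Ginv.comp Ahat = ContinuousLinearMap.id ℝ H)
    (hGinv2 : Ahat.comp Ginv = ContinuousLinearMap.id ℝ H)
    (R : ℝ) (hR : 0 < R) (κ : ℝ)
    (hκ : κ = sSup {u : ℝ | u ∈ Set.Ico (0 : ℝ) R ∧ Metric.ball xs u ⊆ Ω})
    (f f' f'' : ℝ → ℝ)
    (hfd1 : ∀ t ∈ Set.Ico (0 : ℝ) R, HasDerivWithinAt f (f' t) (Set.Ico (0 : ℝ) R) t)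
    (hfd2 : ∀ t ∈ Set.Ico (0 : ℝ) R, HasDerivWithinAt f' (f'' t) (Set.Ico (0 : ℝ) R) t)
    (hfc : ContinuousOn f'' (Set.Ico (0 : ℝ) R))
    (hf0 : f 0 = 0) (hf'0 : f' 0 = -1)
    (hfconv : ConvexOn ℝ (Set.Ico (0 : ℝ) R) f')
    (hfmono : StrictMonoOn f' (Set.Ico (0 : ℝ) R))
    (hmaj : ∀ τ ∈ Set.Icc (0 : ℝ) 1, ∀ x ∈ Metric.ball xs κ,
      ‖Ginv‖ * ‖F' x - F' (xs + τ • (x - xs))‖ ≤ f' ‖x - xs‖ - f' (τ * ‖x - xs‖))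
    (ν : ℝ) (hν : ν = sSup {u : ℝ | u ∈ Set.Ico (0 : ℝ) R ∧ f' u < 0})
    (ρ : ℝ) (hρ : ρ = sSup {u : ℝ | u ∈ Set.Ioo (0 : ℝ) ν ∧ f u / (u * f' u) - 1 < 1})
    (r : ℝ) (hr : r = min κ ρ)
    (xseq : ℕ → H) (hx0 : xseq 0 ∈ Metric.ball xs r) (hx0ne : xseq 0 ≠ xs)
    (hNewton : ∀ k : ℕ, (0 : H) ∈
      (fun w => F (xseq k) + (F' (xseq k)) (xseq (k + 1) - xseq k) + w) '' T (xseq (k + 1)))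
    (tseq : ℕ → ℝ) (ht0 : tseq 0 = ‖xs - xseq 0‖)
    (htk : ∀ k : ℕ, tseq (k + 1) = |tseq k - f (tseq k) / f' (tseq k)|)
    :
    ∀ k : ℕ, ‖xs - xseq k‖ ≤ tseq 0 * (tseq 1 / tseq 0) ^ (2 ^ k - 1) :=
  newton_sequence_explicit_rate_general Ω F F' hFd xs T hT hsol hpsd Ahat hAhat Ginv hGinv2 R κ hκ f
    f' hfd1 hf0 hf'0 hfconv hfmono hmaj ν hν ρ hρ r hr xseq hx0 hx0ne hNewton tseq ht0 htk
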